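/- Let a > 0, d ≥ 2, and let f be a monic real polynomial of degree d with d real roots x₁,…,x_d. If |f(ai)| = m, then the discriminant Δ_f = ∏_{1≤j<k≤d}(x_j − x_k)² satisfies Δ_f ≤ m^(2d−2) · d^d / (2a)^(d(d−1)). -/

import Mathlib

/-!
The Cayley transform `w = (x - c) / (x - c̄)` with `c = a i` maps the real roots onto the unit
circle, and `|w_j - w_k| = 2a |x_j - x_k| / (|x_j - c| |x_k - c|)`, so the Vandermonde
determinant of the `w_k` is `Δ_f^{1/2} (2a)^{d(d-1)/2} / m^{d-1}` in absolute value. Its square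
is at most `d^d`, a Hadamard-type bound for matrices with unimodular entries: AM-GM on the
eigenvalues of `VᴴV`, whose trace is `d²`.
-/

open Finset ComplexConjugate
open scoped ComplexOrder

theorem prod_filter_lt_eq_prod_prod_Ioi {ι M : Type*} [Fintype ι] [LinearOrder ι]
    [LocallyFiniteOrderTop ι] [CommMonoid M] (f : ι → ι → M) :
    ∏ p ∈ univ.filter (fun p : ι × ι => p.1 < p.2), f p.1 p.2 = ∏ i, ∏ j ∈ Ioi i, f i j := by
  rw [prod_filter, ← univ_product_univ, prod_product]
  refine prod_congr rfl fun i _ => ?_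
  rw [← filter_lt_eq_Ioi, prod_filter]

theorem Fin.prod_prod_Ioi_mul {d : ℕ} {M : Type*} [CommMonoid M] (g : Fin d → M) :
    ∏ i, ∏ j ∈ Ioi i, g i * g j = ∏ k, g k ^ (d - 1) := by
  have hleft : ∏ i, ∏ j ∈ Ioi i, g i = ∏ k : Fin d, g k ^ (d - 1 - k) :=
    prod_congr rfl fun i _ => by rw [Finset.prod_const, Fin.card_Ioi]
  have hright : ∏ i, ∏ j ∈ Ioi i, g j = ∏ k : Fin d, g k ^ (k : ℕ) := by
    rw [prod_comm' (t' := univ) (s' := fun j => Iio j) (by simp)]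
    exact prod_congr rfl fun j _ => by rw [Finset.prod_const, Fin.card_Iio]
  simp only [Finset.prod_mul_distrib, hleft, hright]
  rw [← Finset.prod_mul_distrib]
  exact prod_congr rfl fun k _ => by rw [← pow_add, Nat.sub_add_cancel (by omega)]

theorem Real.prod_le_arith_mean_pow {ι : Type*} (s : Finset ι) (z : ι → ℝ)
    (hz : ∀ i ∈ s, 0 ≤ z i) : ∏ i ∈ s, z i ≤ ((∑ i ∈ s, z i) / #s) ^ #s := by
  rcases s.eq_empty_or_nonempty with rfl | hs
  · simp
  have hcard : (0 : ℝ) < #s := by exact_mod_cast hs.card_pos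
  have amgm := Real.geom_mean_le_arith_mean s (fun _ => 1) z (fun _ _ => zero_le_one)
    (by simpa using hcard) hz
  simp only [Real.rpow_one, one_mul, sum_const, nsmul_eq_mul, mul_one] at amgm
  calc ∏ i ∈ s, z i = ((∏ i ∈ s, z i) ^ (#s : ℝ)⁻¹) ^ #s := by
        rw [← Real.rpow_natCast, ← Real.rpow_mul (prod_nonneg hz), inv_mul_cancel₀ hcard.ne',
          Real.rpow_one]
    _ ≤ ((∑ i ∈ s, z i) / #s) ^ #s := by
        gcongr
        exact Real.rpow_nonneg (prod_nonneg hz) _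

namespace Matrix

variable {𝕜 n : Type*} [RCLike 𝕜] [Fintype n] [DecidableEq n]

theorem PosSemidef.re_det_le {G : Matrix n n 𝕜} (hG : G.PosSemidef) :
    RCLike.re G.det ≤ (RCLike.re G.trace / Fintype.card n) ^ Fintype.card n := by
  rw [hG.isHermitian.det_eq_prod_eigenvalues, hG.isHermitian.trace_eq_sum_eigenvalues,
    ← RCLike.ofReal_prod, ← RCLike.ofReal_sum, RCLike.ofReal_re, RCLike.ofReal_re]
  exact Real.prod_le_arith_mean_pow univ _ fun i _ => hG.eigenvalues_nonneg i

theorem norm_det_sq_le (A : Matrix n n 𝕜) :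
    ‖A.det‖ ^ 2 ≤ ((∑ i, ∑ j, ‖A i j‖ ^ 2) / Fintype.card n) ^ Fintype.card n := by
  have hdet : RCLike.re (Aᴴ * A).det = ‖A.det‖ ^ 2 := by
    rw [det_mul, det_conjTranspose, RCLike.star_def, RCLike.conj_mul, ← RCLike.ofReal_pow,
      RCLike.ofReal_re]
  have htrace : RCLike.re (Aᴴ * A).trace = ∑ i, ∑ j, ‖A i j‖ ^ 2 := by
    simp only [trace, diag_apply, mul_apply, conjTranspose_apply, RCLike.star_def,
      RCLike.conj_mul, ← RCLike.ofReal_pow, map_sum, RCLike.ofReal_re]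
    exact sum_comm
  rw [← hdet, ← htrace]
  exact (posSemidef_conjTranspose_mul_self A).re_det_le

theorem norm_det_sq_le_card_pow {A : Matrix n n 𝕜} (hA : ∀ i j, ‖A i j‖ = 1) :
    ‖A.det‖ ^ 2 ≤ (Fintype.card n : ℝ) ^ Fintype.card n := by
  refine (norm_det_sq_le A).trans_eq ?_
  rcases isEmpty_or_nonempty n with hn | hn
  · simp
  simp only [hA, one_pow, sum_const, card_univ, nsmul_eq_mul, mul_one]
  rw [mul_div_cancel_left₀ _ (by positivity)]

end Matrix

namespace Complex

theorem norm_ofReal_sub_conj (c : ℂ) (x : ℝ) : ‖(x : ℂ) - conj c‖ = ‖(x : ℂ) - c‖ := by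
  rw [← norm_conj, map_sub, conj_ofReal, conj_conj]

noncomputable def cayley (c : ℂ) (x : ℝ) : ℂ := (x - c) / (x - conj c)

variable {c : ℂ}

theorem ofReal_sub_conj_ne_zero (hc : c.im ≠ 0) (x : ℝ) : (x : ℂ) - conj c ≠ 0 := by
  intro h
  apply hc
  simpa using congrArg Complex.im h

theorem norm_ofReal_sub_ne_zero (hc : c.im ≠ 0) (x : ℝ) : ‖(x : ℂ) - c‖ ≠ 0 := by
  rw [← norm_ofReal_sub_conj]
  exact norm_ne_zero_iff.mpr (ofReal_sub_conj_ne_zero hc x)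

theorem norm_cayley (hc : c.im ≠ 0) (x : ℝ) : ‖cayley c x‖ = 1 := by
  rw [cayley, norm_div, norm_ofReal_sub_conj, div_self (norm_ofReal_sub_ne_zero hc x)]

theorem cayley_sub_cayley (hc : c.im ≠ 0) (x y : ℝ) :
    cayley c x - cayley c y = (c - conj c) * (x - y) / ((x - conj c) * (y - conj c)) := by
  have hx := ofReal_sub_conj_ne_zero hc x
  have hy := ofReal_sub_conj_ne_zero hc y
  rw [cayley, cayley, div_sub_div _ _ hx hy]
  congr 1
  ring

theorem norm_cayley_sub_cayley (hc : c.im ≠ 0) (x y : ℝ) :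
    ‖cayley c x - cayley c y‖ = 2 * |c.im| * |x - y| / (‖(x : ℂ) - c‖ * ‖(y : ℂ) - c‖) := by
  rw [cayley_sub_cayley hc, norm_div, norm_mul, norm_mul, norm_ofReal_sub_conj,
    norm_ofReal_sub_conj, sub_conj, ← ofReal_sub, norm_mul, norm_I, mul_one, norm_real, norm_real,
    Real.norm_eq_abs, Real.norm_eq_abs, abs_mul, abs_two]

end Complex

open Complex in
theorem mul_prod_sq_sub_le_of_im_ne_zero {d : ℕ} {c : ℂ} (hc : c.im ≠ 0) (x : Fin d → ℝ) :
    (2 * |c.im|) ^ (d * (d - 1)) * ∏ i, ∏ j ∈ Ioi i, (x i - x j) ^ 2 ≤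
      d ^ d * (∏ k, ‖(x k : ℂ) - c‖) ^ (2 * d - 2) := by
  set V := Matrix.vandermonde (cayley c ∘ x)
  have hV : ‖V.det‖ ^ 2 ≤ (d : ℝ) ^ d := by
    simpa using Matrix.norm_det_sq_le_card_pow (A := V) fun i j => by
      simp [V, Matrix.vandermonde_apply, norm_cayley hc]
  have hdetV : ‖V.det‖ ^ 2 = ∏ i, ∏ j ∈ Ioi i, ‖cayley c (x j) - cayley c (x i)‖ ^ 2 := by
    simp only [V, Matrix.det_vandermonde, norm_prod, ← Finset.prod_pow, Function.comp_apply]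
  have hdist : (∏ k, ‖(x k : ℂ) - c‖) ^ (2 * d - 2) =
      ∏ i, ∏ j ∈ Ioi i, ‖(x i : ℂ) - c‖ ^ 2 * ‖(x j : ℂ) - c‖ ^ 2 := by
    rw [Fin.prod_prod_Ioi_mul fun k => ‖(x k : ℂ) - c‖ ^ 2, ← Finset.prod_pow]
    exact prod_congr rfl fun k _ => by rw [← pow_mul]; congr 1; omega
  have hconst : ∏ i : Fin d, ∏ j ∈ Ioi i, (2 * |c.im| * (2 * |c.im|)) =
      (2 * |c.im|) ^ (d * (d - 1)) := by
    rw [Fin.prod_prod_Ioi_mul fun _ => 2 * |c.im|, Finset.prod_const, card_univ,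
      Fintype.card_fin, ← pow_mul, mul_comm (d - 1)]
  have hpair : ∀ i j, ‖cayley c (x j) - cayley c (x i)‖ ^ 2 *
      (‖(x i : ℂ) - c‖ ^ 2 * ‖(x j : ℂ) - c‖ ^ 2) = 2 * |c.im| * (2 * |c.im|) * (x i - x j) ^ 2 :=
    fun i j => by
      rw [norm_cayley_sub_cayley hc, div_pow, div_mul_eq_mul_div, div_eq_iff (by
        simp [norm_ofReal_sub_ne_zero hc]), mul_pow, sq_abs (x j - x i)]
      ring
  calc (2 * |c.im|) ^ (d * (d - 1)) * ∏ i, ∏ j ∈ Ioi i, (x i - x j) ^ 2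
      = ‖V.det‖ ^ 2 * (∏ k, ‖(x k : ℂ) - c‖) ^ (2 * d - 2) := by
        simp only [hdetV, hdist, ← hconst, ← Finset.prod_mul_distrib, hpair]
    _ ≤ d ^ d * (∏ k, ‖(x k : ℂ) - c‖) ^ (2 * d - 2) := by gcongr

theorem disc_le_general (d : ℕ) (a m : ℝ) (ha : 0 < a) (x : Fin d → ℝ)
    (hm : ‖∏ k, ((a : ℂ) * Complex.I - (x k : ℂ))‖ = m) :
    ∏ p ∈ Finset.univ.filter (fun p : Fin d × Fin d => p.1 < p.2), (x p.1 - x p.2) ^ 2 ≤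
      m ^ (2 * d - 2) * d ^ d / (2 * a) ^ (d * (d - 1)) := by
  have hbound := mul_prod_sq_sub_le_of_im_ne_zero (c := a * Complex.I) (by simpa using ha.ne') x
  have hdist : ∏ k, ‖(x k : ℂ) - a * Complex.I‖ = m := by
    simp_rw [norm_sub_rev _ ((a : ℂ) * Complex.I)]
    rw [← norm_prod, hm]
  rw [hdist, Complex.mul_I_im, Complex.ofReal_re, abs_of_pos ha] at hbound
  rw [prod_filter_lt_eq_prod_prod_Ioi fun i j => (x i - x j) ^ 2, le_div_iff₀ (by positivity)]
  linarith

theorem disc_le (d : ℕ) (hd : 2 ≤ d) (a m : ℝ) (ha : 0 < a) (x : Fin d → ℝ)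
    (hm : ‖∏ k, ((a : ℂ) * Complex.I - (x k : ℂ))‖ = m) :
    ∏ p ∈ Finset.univ.filter (fun p : Fin d × Fin d => p.1 < p.2), (x p.1 - x p.2) ^ 2 ≤
      m ^ (2 * d - 2) * d ^ d / (2 * a) ^ (d * (d - 1)) :=
  disc_le_general d a m ha x hm
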